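/- arXiv:2004.12487 — 10 statements merged into one kernel-verified Lean document; each statement's English description precedes it below -/
import Mathlib

section
/- Every bounded functional on D(T*) with respect to the norm ‖T*·‖ is represented by a unique element of H through T*: if ℓ : D(T*) → ℝ is linear and there is a constant C ≥ 0 with |ℓ(w)| ≤ C‖T*w‖ for all w ∈ D(T*), then there exists a unique q ∈ H such that ℓ(w) = ⟨q, T*w⟩ for all w ∈ D(T*). (This is the surjectivity of the isometry L_w : H → D'(T*).) -/
open scoped RealInnerProductSpace

/-- Every functional on `D(T†)` bounded with respect to the norm `‖T†·‖`
is represented by a unique element of `H` through `T†`. -/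
theorem llstar_Lw_surjective
    {H : Type*} [NormedAddCommGroup H] [InnerProductSpace ℝ H] [CompleteSpace H]
    (T : H →ₗ.[ℝ] H) (hdense : Dense (T.domain : Set H)) (hclosed : T.IsClosed)
    (cP : ℝ) (hcP : 0 < cP)
    (hPoincare : ∀ w : T.adjoint.domain, cP * ‖(w : H)‖ ≤ ‖T.adjoint w‖)
    (hsurj : ∀ q : H, ∃ w : T.adjoint.domain, T.adjoint w = q)
    (ℓ : T.adjoint.domain →ₗ[ℝ] ℝ) (C : ℝ) (hC : 0 ≤ C)
    (hbound : ∀ w : T.adjoint.domain, |ℓ w| ≤ C * ‖T.adjoint w‖) :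
    ∃! q : H, ∀ w : T.adjoint.domain, ℓ w = ⟪q, T.adjoint w⟫ := by
  classical
  -- Key: ℓ depends only on T.adjoint w
  have key : ∀ w w' : T.adjoint.domain, T.adjoint w = T.adjoint w' → ℓ w = ℓ w' := by
    intro w w' h
    have h0 : T.adjoint (w - w') = 0 := by
      have := T.adjoint.toFun.map_sub w w'
      simp only [LinearPMap.toFun_eq_coe] at this
      rw [this, h, sub_self]
    have hb := hbound (w - w')
    rw [h0] at hb
    simp only [norm_zero, mul_zero] at hb
    have hℓ0 := abs_nonpos_iff.mp hb
    rw [map_sub, sub_eq_zero] at hℓ0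
    exact hℓ0
  set g : H → T.adjoint.domain := fun q => (hsurj q).choose with hg
  have hgspec : ∀ q, T.adjoint (g q) = q := fun q => (hsurj q).choose_spec
  set f : H →ₗ[ℝ] ℝ :=
    { toFun := fun q => ℓ (g q)
      map_add' := by
        intro x y
        show ℓ (g (x + y)) = ℓ (g x) + ℓ (g y)
        have h1 : ℓ (g (x + y)) = ℓ (g x + g y) := by
          apply key
          have := T.adjoint.toFun.map_add (g x) (g y)
          simp only [LinearPMap.toFun_eq_coe] at this
          rw [this, hgspec, hgspec, hgspec]
        rw [h1, map_add]
      map_smul' := by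
        intro c x
        show ℓ (g (c • x)) = c • ℓ (g x)
        have h1 : ℓ (g (c • x)) = ℓ (c • g x) := by
          apply key
          have := T.adjoint.toFun.map_smul c (g x)
          simp only [LinearPMap.toFun_eq_coe] at this
          rw [this, hgspec, hgspec]
        rw [h1, map_smul] } with hfdef
  have hf : ∀ x : H, f x = ℓ (g x) := fun _ => rfl
  have hfb : ∀ x : H, ‖f x‖ ≤ C * ‖x‖ := by
    intro x
    rw [hf]
    calc ‖ℓ (g x)‖ = |ℓ (g x)| := rfl
      _ ≤ C * ‖T.adjoint (g x)‖ := hbound _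
      _ = C * ‖x‖ := by rw [hgspec]
  set F : H →L[ℝ] ℝ := LinearMap.mkContinuous f C hfb with hFdef
  have hFf : ∀ x : H, F x = ℓ (g x) := fun _ => rfl
  set q : H := (InnerProductSpace.toDual ℝ H).symm F with hq
  have hqspec : ∀ x : H, ⟪q, x⟫ = F x := fun x =>
    InnerProductSpace.toDual_symm_apply
  refine ⟨q, ?_, ?_⟩
  · intro w
    rw [hqspec, hFf]
    exact (key _ _ (hgspec _)).symm
  · intro q' hq'
    have hz : ∀ x : H, ⟪q' - q, x⟫ = 0 := by
      intro x
      obtain ⟨w, rfl⟩ := hsurj x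
      have h1 := hq' w
      have h2 : ℓ w = ⟪q, T.adjoint w⟫ := by
        rw [hqspec, hFf]
        exact (key _ _ (hgspec _)).symm
      rw [inner_sub_left, ← h1, ← h2, sub_self]
    have hzz := hz (q' - q)
    rw [inner_self_eq_zero] at hzz
    exact sub_eq_zero.mp hzz
end

section
/- For every linear functional ℓ : D(T*) → ℝ that is bounded with respect to the norm ‖T*·‖ (i.e., there is C ≥ 0 with |ℓ(w)| ≤ C‖T*w‖ for all w ∈ D(T*)), there exists a unique ẑ ∈ D(T*) satisfying the weak problem ⟨T*ẑ, T*w⟩ = ℓ(w) for all w ∈ D(T*); moreover, this solution operator is an isometry: ‖T*ẑ‖ equals the supremum over w ∈ D(T*) with T*w ≠ 0 of |ℓ(w)| / ‖T*w‖. -/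
open scoped RealInnerProductSpace

section Aux

variable {H : Type*} [NormedAddCommGroup H] [InnerProductSpace ℝ H] [CompleteSpace H]

/-- Under the Poincaré inequality, the range of `T†` is closed. -/
lemma aux_adjoint_range_closed (T : H →ₗ.[ℝ] H) (hdense : Dense (T.domain : Set H))
    (cP : ℝ) (hcP : 0 < cP)
    (hPoincare : ∀ w : T.adjoint.domain, cP * ‖(w : H)‖ ≤ ‖T.adjoint w‖) :
    IsClosed ((LinearMap.range T.adjoint.toFun : Submodule ℝ H) : Set H) := by
  apply IsSeqClosed.isClosed
  intro x u hx hu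
  choose w hw using hx
  have hw' : ∀ n, T.adjoint (w n) = x n := hw
  have hxC : CauchySeq x := hu.cauchySeq
  have hwC : CauchySeq (fun n => (w n : H)) := by
    rw [Metric.cauchySeq_iff] at hxC ⊢
    intro ε hε
    obtain ⟨N, hN⟩ := hxC (cP * ε) (by positivity)
    refine ⟨N, fun m hm n hn => ?_⟩
    have h1 := hPoincare (w m - w n)
    have h2 : T.adjoint (w m - w n) = x m - x n := by
      rw [LinearPMap.map_sub, hw', hw']
    rw [h2] at h1
    have h3 : ((w m - w n : T.adjoint.domain) : H) = (w m : H) - (w n : H) := rfl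
    rw [h3] at h1
    have h4 := hN m hm n hn
    rw [dist_eq_norm] at h4 ⊢
    nlinarith [norm_nonneg ((w m : H) - (w n : H))]
  obtain ⟨l, hl⟩ := cauchySeq_tendsto_of_complete hwC
  have key : ∀ v : T.domain, ⟪u, (v : H)⟫ = ⟪l, T v⟫ := by
    intro v
    have h1 : Filter.Tendsto (fun n => ⟪x n, (v : H)⟫) Filter.atTop (nhds ⟪u, (v : H)⟫) :=
      hu.inner tendsto_const_nhds
    have h2 : Filter.Tendsto (fun n => ⟪(w n : H), T v⟫) Filter.atTop (nhds ⟪l, T v⟫) :=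
      hl.inner tendsto_const_nhds
    have heq : (fun n => ⟪x n, (v : H)⟫) = fun n => ⟪(w n : H), T v⟫ := by
      funext n
      rw [← hw' n]
      exact (LinearPMap.adjoint_isFormalAdjoint hdense) (w n) v
    rw [heq] at h1
    exact tendsto_nhds_unique h1 h2
  have hmem : l ∈ T.adjoint.domain :=
    LinearPMap.mem_adjoint_domain_of_exists l ⟨u, key⟩
  exact ⟨⟨l, hmem⟩, LinearPMap.adjoint_apply_eq hdense ⟨l, hmem⟩ key⟩

end Aux

/-- For every functional `ℓ` on `D(T†)` bounded with respect to `‖T†·‖`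
there is a unique `ẑ ∈ D(T†)` with `⟪T†ẑ, T†w⟫ = ℓ(w)` for all `w ∈ D(T†)`, and the
solution operator is an isometry:
`‖T†ẑ‖ = sup { |ℓ(w)| / ‖T†w‖ : w ∈ D(T†), T†w ≠ 0 }`. -/
theorem llstar_inv_wellDefined_isometry
    {H : Type*} [NormedAddCommGroup H] [InnerProductSpace ℝ H] [CompleteSpace H]
    (T : H →ₗ.[ℝ] H) (hdense : Dense (T.domain : Set H)) (hclosed : T.IsClosed)
    (cP : ℝ) (hcP : 0 < cP)
    (hPoincare : ∀ w : T.adjoint.domain, cP * ‖(w : H)‖ ≤ ‖T.adjoint w‖)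
    (ℓ : T.adjoint.domain →ₗ[ℝ] ℝ) (C : ℝ) (hC : 0 ≤ C)
    (hbound : ∀ w : T.adjoint.domain, |ℓ w| ≤ C * ‖T.adjoint w‖) :
    (∃! z : T.adjoint.domain,
        ∀ w : T.adjoint.domain, ⟪T.adjoint z, T.adjoint w⟫ = ℓ w) ∧
    ∀ z : T.adjoint.domain,
      (∀ w : T.adjoint.domain, ⟪T.adjoint z, T.adjoint w⟫ = ℓ w) →
      ‖T.adjoint z‖ = sSup {r : ℝ | ∃ w : T.adjoint.domain, T.adjoint w ≠ 0 ∧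
        r = |ℓ w| / ‖T.adjoint w‖} := by
  classical
  -- injectivity of `T.adjoint` from the Poincaré inequality
  have hinj0 : ∀ w : T.adjoint.domain, T.adjoint w = 0 → w = 0 := by
    intro w hw
    have h1 := hPoincare w
    rw [hw, norm_zero] at h1
    have h2 : ‖(w : H)‖ ≤ 0 := by nlinarith
    have hn : ‖(w : H)‖ = 0 := le_antisymm h2 (norm_nonneg _)
    exact Subtype.ext (by simpa using norm_eq_zero.mp hn)
  haveI : CompleteSpace (LinearMap.range T.adjoint.toFun) :=
    (aux_adjoint_range_closed T hdense cP hcP hPoincare).completeSpace_coe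
  have hBinj : Function.Injective T.adjoint.toFun.rangeRestrict := by
    intro a b hab
    have h1 : T.adjoint.toFun a = T.adjoint.toFun b := congrArg Subtype.val hab
    have h2 : T.adjoint (a - b) = 0 := by
      rw [LinearPMap.map_sub]
      show T.adjoint.toFun a - T.adjoint.toFun b = 0
      rw [h1, sub_self]
    have := hinj0 _ h2
    rwa [sub_eq_zero] at this
  have hBsurj : Function.Surjective T.adjoint.toFun.rangeRestrict :=
    T.adjoint.toFun.surjective_rangeRestrict
  let e : T.adjoint.domain ≃ₗ[ℝ] LinearMap.range T.adjoint.toFun :=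
    LinearEquiv.ofBijective T.adjoint.toFun.rangeRestrict ⟨hBinj, hBsurj⟩
  have hAe : ∀ u : LinearMap.range T.adjoint.toFun, T.adjoint (e.symm u) = (u : H) := by
    intro u
    have h1 : e (e.symm u) = u := e.apply_symm_apply u
    exact congrArg Subtype.val h1
  let φ₀ : LinearMap.range T.adjoint.toFun →ₗ[ℝ] ℝ :=
    ℓ.comp (e.symm : LinearMap.range T.adjoint.toFun →ₗ[ℝ] T.adjoint.domain)
  have hφ₀ : ∀ u : LinearMap.range T.adjoint.toFun, ‖φ₀ u‖ ≤ C * ‖u‖ := by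
    intro u
    rw [Real.norm_eq_abs]
    calc |φ₀ u| = |ℓ (e.symm u)| := rfl
    _ ≤ C * ‖T.adjoint (e.symm u)‖ := hbound _
    _ = C * ‖u‖ := by rw [hAe, ← Submodule.coe_norm]
  let φ := φ₀.mkContinuous C hφ₀
  let v := (InnerProductSpace.toDual ℝ (LinearMap.range T.adjoint.toFun)).symm φ
  let zhat : T.adjoint.domain := e.symm v
  have hsol : ∀ w : T.adjoint.domain, ⟪T.adjoint zhat, T.adjoint w⟫ = ℓ w := by
    intro w
    have h1 : ⟪v, T.adjoint.toFun.rangeRestrict w⟫ = φ (T.adjoint.toFun.rangeRestrict w) :=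
      InnerProductSpace.toDual_symm_apply
    have h2 : φ (T.adjoint.toFun.rangeRestrict w) = ℓ (e.symm (e w)) := rfl
    have h3 : e.symm (e w) = w := e.symm_apply_apply w
    have h4 : ⟪T.adjoint zhat, T.adjoint w⟫
        = ⟪(v : H), ((T.adjoint.toFun.rangeRestrict w : LinearMap.range T.adjoint.toFun) : H)⟫ := by
      rw [hAe]; rfl
    rw [h4, ← Submodule.coe_inner, h1, h2, h3]
  have huniq : ∀ z : T.adjoint.domain,
      (∀ w : T.adjoint.domain, ⟪T.adjoint z, T.adjoint w⟫ = ℓ w) → z = zhat := by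
    intro z hz
    have h0 : ⟪T.adjoint (z - zhat), T.adjoint (z - zhat)⟫ = 0 := by
      have e1 : ⟪T.adjoint z, T.adjoint (z - zhat)⟫ = ℓ (z - zhat) := hz _
      have e2 : ⟪T.adjoint zhat, T.adjoint (z - zhat)⟫ = ℓ (z - zhat) := hsol _
      have e3 : ⟪T.adjoint z - T.adjoint zhat, T.adjoint (z - zhat)⟫ = 0 := by
        rw [inner_sub_left, e1, e2, sub_self]
      rw [LinearPMap.map_sub] at e3 ⊢; exact e3
    have h1 : T.adjoint (z - zhat) = 0 := inner_self_eq_zero.mp h0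
    have := hinj0 _ h1
    rwa [sub_eq_zero] at this
  refine ⟨⟨zhat, hsol, huniq⟩, ?_⟩
  intro z hz
  have hub : ∀ r ∈ {r : ℝ | ∃ w : T.adjoint.domain, T.adjoint w ≠ 0 ∧
      r = |ℓ w| / ‖T.adjoint w‖}, r ≤ ‖T.adjoint z‖ := by
    rintro r ⟨w, hw, rfl⟩
    rw [div_le_iff₀ (norm_pos_iff.mpr hw), ← hz w]
    exact abs_real_inner_le_norm _ _
  by_cases h0 : T.adjoint z = 0
  · have hz0 : ∀ w : T.adjoint.domain, ℓ w = 0 := fun w => by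
      rw [← hz w, h0, inner_zero_left]
    rw [h0, norm_zero]
    rcases Set.eq_empty_or_nonempty
        {r : ℝ | ∃ w : T.adjoint.domain, T.adjoint w ≠ 0 ∧ r = |ℓ w| / ‖T.adjoint w‖}
        with hS | hS
    · rw [hS, Real.sSup_empty]
    · have hSeq : {r : ℝ | ∃ w : T.adjoint.domain, T.adjoint w ≠ 0 ∧
          r = |ℓ w| / ‖T.adjoint w‖} = {0} := by
        apply Set.eq_singleton_iff_nonempty_unique_mem.mpr
        refine ⟨hS, ?_⟩
        rintro r ⟨w, hw, rfl⟩
        rw [hz0, abs_zero, zero_div]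
      rw [hSeq, csSup_singleton]
  · have hmem : ‖T.adjoint z‖ ∈ {r : ℝ | ∃ w : T.adjoint.domain, T.adjoint w ≠ 0 ∧
        r = |ℓ w| / ‖T.adjoint w‖} := by
      refine ⟨z, h0, ?_⟩
      have h1 : |ℓ z| = ‖T.adjoint z‖ * ‖T.adjoint z‖ := by
        rw [← hz z, real_inner_self_eq_norm_mul_norm, abs_of_nonneg (by positivity)]
      rw [h1, mul_div_assoc, div_self (norm_ne_zero_iff.mpr h0), mul_one]
    exact le_antisymm (le_csSup ⟨‖T.adjoint z‖, hub⟩ hmem) (csSup_le ⟨‖T.adjoint z‖, hmem⟩ hub)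
end

section
/- Let p, q ∈ H and suppose z_p, z_q ∈ D(T*) satisfy the weak problems ⟨T*z_p, T*w⟩ = ⟨p, w⟩ and ⟨T*z_q, T*w⟩ = ⟨q, w⟩ for all w ∈ D(T*). Then: (i) ⟨q, z_p⟩ = ⟨p, z_q⟩ (the solution operator (L_wL*)⁻¹ : H → D(T*) is self-adjoint with respect to the H inner product); (ii) ⟨q, z_q⟩ ≥ 0, with equality if and only if q = 0 (positive definiteness); and (iii) ⟨q, z_q⟩ equals the square of the supremum over w ∈ D(T*) with T*w ≠ 0 of |⟨q, w⟩| / ‖T*w‖. -/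
open scoped RealInnerProductSpace

/-!
Testing the weak problem for `z_q` against `w = z_q` gives `⟪q, z_q⟫ = ‖T†z_q‖²`, and testing it
against `z_p` (and the problem for `z_p` against `z_q`) gives the symmetry. By Cauchy–Schwarz,
`|⟪q, w⟫| = |⟪T†z_q, T†w⟫| ≤ ‖T†z_q‖ ‖T†w‖`, with equality at `w = z_q`, so the dual norm of `q`
is `‖T†z_q‖`. If `⟪q, z_q⟫ = 0` then `T†z_q = 0`, so `q` is orthogonal to the dense set `D(T†)`.
-/

namespace LinearPMap

variable {E F : Type*} [NormedAddCommGroup E] [InnerProductSpace ℝ E]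
  [NormedAddCommGroup F] [InnerProductSpace ℝ F]

def IsWeakSolution (f : E →ₗ.[ℝ] F) (q : E) (z : f.domain) : Prop :=
  ∀ w : f.domain, ⟪f z, f w⟫ = ⟪q, (w : E)⟫

variable {f : E →ₗ.[ℝ] F} {p q : E} {zp zq : f.domain}

theorem IsWeakSolution.inner_eq_norm_sq (hzq : f.IsWeakSolution q zq) :
    ⟪q, (zq : E)⟫ = ‖f zq‖ ^ 2 := by
  rw [← hzq zq, real_inner_self_eq_norm_sq]

theorem IsWeakSolution.inner_comm (hzp : f.IsWeakSolution p zp) (hzq : f.IsWeakSolution q zq) :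
    ⟪q, (zp : E)⟫ = ⟪p, (zq : E)⟫ := by
  rw [← hzq zp, real_inner_comm, hzp zq]

theorem IsWeakSolution.eq_zero_of_apply_eq_zero (hdense : Dense (f.domain : Set E))
    (hzq : f.IsWeakSolution q zq) (h : f zq = 0) : q = 0 :=
  hdense.eq_zero_of_inner_left ℝ fun w hw => by
    simpa [h] using (hzq ⟨w, hw⟩).symm

theorem IsWeakSolution.inner_eq_zero_iff (hdense : Dense (f.domain : Set E))
    (hzq : f.IsWeakSolution q zq) : ⟪q, (zq : E)⟫ = 0 ↔ q = 0 := by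
  refine ⟨fun h => hzq.eq_zero_of_apply_eq_zero hdense ?_, fun h => by simp [h]⟩
  simpa [hzq.inner_eq_norm_sq] using h

theorem IsWeakSolution.abs_inner_le (hzq : f.IsWeakSolution q zq) (w : f.domain) :
    |⟪q, (w : E)⟫| ≤ ‖f zq‖ * ‖f w‖ := by
  rw [← hzq w]
  exact abs_real_inner_le_norm _ _

theorem IsWeakSolution.sSup_abs_inner_div_eq_norm (hzq : f.IsWeakSolution q zq) :
    sSup {r : ℝ | ∃ w : f.domain, f w ≠ 0 ∧ r = |⟪q, (w : E)⟫| / ‖f w‖} = ‖f zq‖ := by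
  set S := {r : ℝ | ∃ w : f.domain, f w ≠ 0 ∧ r = |⟪q, (w : E)⟫| / ‖f w‖}
  have hle : ∀ r ∈ S, r ≤ ‖f zq‖ := by
    rintro r ⟨w, hw, rfl⟩
    rw [div_le_iff₀ (norm_pos_iff.mpr hw)]
    exact hzq.abs_inner_le w
  by_cases hzero : f zq = 0
  · have hS : S ⊆ {0} := fun r hr =>
      le_antisymm (by simpa [hzero] using hle r hr) (by obtain ⟨w, -, rfl⟩ := hr; positivity)
    rcases S.eq_empty_or_nonempty with hempty | hne
    · simp [hzero, hempty]
    · simp [hzero, hne.subset_singleton_iff.mp hS]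
  · refine IsGreatest.csSup_eq ⟨⟨zq, hzero, ?_⟩, hle⟩
    rw [hzq.inner_eq_norm_sq, abs_sq, sq, mul_div_assoc, div_self (norm_ne_zero_iff.mpr hzero),
      mul_one]

end LinearPMap

theorem llstar_inv_selfadjoint_posdef_dualnorm_general
    {H : Type*} [NormedAddCommGroup H] [InnerProductSpace ℝ H] [CompleteSpace H]
    (T : H →ₗ.[ℝ] H)
    (hdenseAdj : Dense (T.adjoint.domain : Set H))
    (p q : H) (zp zq : T.adjoint.domain)
    (hzp : ∀ w : T.adjoint.domain, ⟪T.adjoint zp, T.adjoint w⟫ = ⟪p, (w : H)⟫)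
    (hzq : ∀ w : T.adjoint.domain, ⟪T.adjoint zq, T.adjoint w⟫ = ⟪q, (w : H)⟫) :
    ⟪q, (zp : H)⟫ = ⟪p, (zq : H)⟫ ∧
    (0 ≤ ⟪q, (zq : H)⟫ ∧ (⟪q, (zq : H)⟫ = 0 ↔ q = 0)) ∧
    ⟪q, (zq : H)⟫ = (sSup {r : ℝ | ∃ w : T.adjoint.domain, T.adjoint w ≠ 0 ∧
        r = |⟪q, (w : H)⟫| / ‖T.adjoint w‖}) ^ 2 := by
  have hzp : T.adjoint.IsWeakSolution p zp := hzp
  have hzq : T.adjoint.IsWeakSolution q zq := hzq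
  refine ⟨hzp.inner_comm hzq, ⟨?_, hzq.inner_eq_zero_iff hdenseAdj⟩, ?_⟩
  · rw [hzq.inner_eq_norm_sq]
    positivity
  · rw [hzq.sSup_abs_inner_div_eq_norm, hzq.inner_eq_norm_sq]

/-- Self-adjointness and positive definiteness of the solution operator
`(L_w L*)⁻¹` and its relation to the dual norm: if `z_p, z_q ∈ D(T†)` solve
`⟪T†z_p, T†w⟫ = ⟪p, w⟫` and `⟪T†z_q, T†w⟫ = ⟪q, w⟫` for all `w ∈ D(T†)`, then
(i) `⟪q, z_p⟫ = ⟪p, z_q⟫`; (ii) `⟪q, z_q⟫ ≥ 0` with equality iff `q = 0`;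
(iii) `⟪q, z_q⟫ = (sup { |⟪q, w⟫| / ‖T†w‖ : w ∈ D(T†), T†w ≠ 0 })²`. -/
theorem llstar_inv_selfadjoint_posdef_dualnorm
    {H : Type*} [NormedAddCommGroup H] [InnerProductSpace ℝ H] [CompleteSpace H]
    (T : H →ₗ.[ℝ] H) (hdense : Dense (T.domain : Set H)) (hclosed : T.IsClosed)
    (hdenseAdj : Dense (T.adjoint.domain : Set H))
    (cP : ℝ) (hcP : 0 < cP)
    (hPoincare : ∀ w : T.adjoint.domain, cP * ‖(w : H)‖ ≤ ‖T.adjoint w‖)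
    (p q : H) (zp zq : T.adjoint.domain)
    (hzp : ∀ w : T.adjoint.domain, ⟪T.adjoint zp, T.adjoint w⟫ = ⟪p, (w : H)⟫)
    (hzq : ∀ w : T.adjoint.domain, ⟪T.adjoint zq, T.adjoint w⟫ = ⟪q, (w : H)⟫) :
    ⟪q, (zp : H)⟫ = ⟪p, (zq : H)⟫ ∧
    (0 ≤ ⟪q, (zq : H)⟫ ∧ (⟪q, (zq : H)⟫ = 0 ↔ q = 0)) ∧
    ⟪q, (zq : H)⟫ = (sSup {r : ℝ | ∃ w : T.adjoint.domain, T.adjoint w ≠ 0 ∧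
        r = |⟪q, (w : H)⟫| / ‖T.adjoint w‖}) ^ 2 :=
  llstar_inv_selfadjoint_posdef_dualnorm_general T hdenseAdj p q zp zq hzp hzq
end

section
/- Let v, v' ∈ D(T) (the domain of T) and suppose z ∈ Z satisfies the discrete weak problem ⟨T*z, T*w⟩ = ⟨T v', w⟩ for all w ∈ Z. Then ⟨T*z, v⟩ = ⟨P v', v⟩. (Consequently, the bilinear form ⟨(L_wL*)_ħ⁻¹ T·, T·⟩ of the discrete (LL*)⁻¹ method coincides with the form ⟨P ·, ·⟩.) -/
open scoped RealInnerProductSpace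

/-- For `v, v' ∈ D(T)`, if `z ∈ Z` solves the discrete weak problem
`⟪T†z, T†w⟫ = ⟪T v', w⟫` for all `w ∈ Z`, then `⟪T†z, v⟫ = ⟪P v', v⟫`. -/
theorem discrete_llstar_inv_bilinear_form
    {H : Type*} [NormedAddCommGroup H] [InnerProductSpace ℝ H] [CompleteSpace H]
    (T : H →ₗ.[ℝ] H) (hdense : Dense (T.domain : Set H)) (hclosed : T.IsClosed)
    (Z : Submodule ℝ T.adjoint.domain) [FiniteDimensional ℝ Z]
    (W : Submodule ℝ H) (hW : W = Z.map T.adjoint.toFun)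
    (P : H →ₗ[ℝ] H) (hPmem : ∀ q : H, P q ∈ W)
    (hPorth : ∀ q : H, ∀ w ∈ W, ⟪q - P q, w⟫ = 0)
    (v v' : T.domain) (z : T.adjoint.domain) (hz : z ∈ Z)
    (hweak : ∀ w : T.adjoint.domain, w ∈ Z →
      ⟪T.adjoint z, T.adjoint w⟫ = ⟪T v', (w : H)⟫) :
    ⟪T.adjoint z, (v : H)⟫ = ⟪P (v' : H), (v : H)⟫ := by
  have hform := LinearPMap.adjoint_isFormalAdjoint hdense
  -- key: T† z = P v'
  have hmemz : T.adjoint z ∈ W := by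
    rw [hW]; exact ⟨z, hz, rfl⟩
  have hdmem : T.adjoint z - P (v' : H) ∈ W := W.sub_mem hmemz (hPmem _)
  have horth : ∀ u ∈ W, ⟪T.adjoint z - P (v' : H), u⟫ = 0 := by
    intro u hu
    rw [hW] at hu
    obtain ⟨w, hwZ, rfl⟩ := hu
    have h1 : ⟪T.adjoint z, T.adjoint w⟫ = ⟪(v' : H), T.adjoint w⟫ := by
      rw [hweak w hwZ, real_inner_comm]
      linarith [hform w v', real_inner_comm ((T v' : H)) ((w : H)), real_inner_comm ((v' : H)) ((T.adjoint w : H))]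
    have h2 : ⟪(v' : H) - P (v' : H), T.adjoint w⟫ = 0 := by
      apply hPorth
      rw [hW]; exact ⟨w, hwZ, rfl⟩
    have : (T.adjoint.toFun w : H) = T.adjoint w := rfl
    rw [this]
    rw [inner_sub_left] at h2 ⊢
    rw [h1]
    linarith
  have hzero : T.adjoint z - P (v' : H) = 0 := by
    have := horth _ hdmem
    rwa [inner_self_eq_zero] at this
  have hkey : (T.adjoint z : H) = P (v' : H) := by
    have := sub_eq_zero.mp hzero
    exact this
  rw [hkey]
end

section
/- Suppose the inf-sup condition holds: there is a constant c > 0 such that for every nonzero v ∈ U, the supremum over w ∈ Z with T*w ≠ 0 of |⟨v, T*w⟩| / ‖T*w‖ is at least c‖v‖. Then the spectral equivalence holds: c²‖v‖² ≤ ⟨P v, v⟩ ≤ ‖v‖² for all v ∈ U. In particular, the bilinear form (u, v) ↦ ⟨P u, v⟩ is nondegenerate on U. -/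
open scoped RealInnerProductSpace

/-! Since `v - P v ⟂ W`, we have `⟪P v, v⟫ = ‖P v‖²`, and by Cauchy–Schwarz this is at most
`‖P v‖ ‖v‖`, whence `‖P v‖ ≤ ‖v‖`. For `w ∈ Z` the same orthogonality gives
`⟪v, T* w⟫ = ⟪P v, T* w⟫`, so every quotient in the inf-sup condition is at most `‖P v‖`;
hence `c ‖v‖ ≤ ‖P v‖`. Squaring gives the spectral equivalence, and its lower bound forces
`v = 0` as soon as `⟪P v, v⟫ = 0`. -/

section OrthogonalResidual

variable {E : Type*} [NormedAddCommGroup E] [InnerProductSpace ℝ E] {p q x : E}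

theorem real_inner_eq_norm_sq_of_inner_sub_eq_zero (h : ⟪q - p, p⟫ = 0) :
    ⟪p, q⟫ = ‖p‖ ^ 2 := by
  rw [inner_sub_left, real_inner_comm, sub_eq_zero] at h
  rw [h, real_inner_self_eq_norm_sq]

theorem norm_le_of_inner_sub_eq_zero (h : ⟪q - p, p⟫ = 0) : ‖p‖ ≤ ‖q‖ := by
  have hsq : ‖p‖ ^ 2 ≤ ‖p‖ * ‖q‖ :=
    real_inner_eq_norm_sq_of_inner_sub_eq_zero h ▸ real_inner_le_norm p q
  rcases (norm_nonneg p).eq_or_lt with hp | hp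
  · rw [← hp]
    exact norm_nonneg q
  · nlinarith

theorem abs_real_inner_div_norm_le_of_inner_sub_eq_zero (h : ⟪q - p, x⟫ = 0) :
    |⟪q, x⟫| / ‖x‖ ≤ ‖p‖ := by
  rw [inner_sub_left, sub_eq_zero] at h
  rw [h]
  exact div_le_of_le_mul₀ (norm_nonneg x) (norm_nonneg p) (abs_real_inner_le_norm p x)

end OrthogonalResidual

theorem infsup_implies_spectral_equivalence_general
    {H : Type*} [NormedAddCommGroup H] [InnerProductSpace ℝ H] [CompleteSpace H]
    (T : H →ₗ.[ℝ] H)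
    (Z : Submodule ℝ T.adjoint.domain)
    (W : Submodule ℝ H) (hW : W = Z.map T.adjoint.toFun)
    (P : H →ₗ[ℝ] H) (hPmem : ∀ q : H, P q ∈ W)
    (hPorth : ∀ q : H, ∀ w ∈ W, ⟪q - P q, w⟫ = 0)
    (U : Submodule ℝ H)
    (c : ℝ) (hc : 0 < c)
    (hinfsup : ∀ v ∈ U, v ≠ 0 →
      c * ‖v‖ ≤ sSup {r : ℝ | ∃ w : T.adjoint.domain, w ∈ Z ∧ T.adjoint w ≠ 0 ∧
        r = |⟪v, T.adjoint w⟫| / ‖T.adjoint w‖}) :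
    (∀ v ∈ U, c ^ 2 * ‖v‖ ^ 2 ≤ ⟪P v, v⟫ ∧ ⟪P v, v⟫ ≤ ‖v‖ ^ 2) ∧
    (∀ v ∈ U, (∀ u ∈ U, ⟪P v, u⟫ = 0) → v = 0) := by
  have hresidual : ∀ v, ⟪v - P v, P v⟫ = 0 := fun v => hPorth v _ (hPmem v)
  have hlower : ∀ v ∈ U, c * ‖v‖ ≤ ‖P v‖ := by
    intro v hv
    rcases eq_or_ne v 0 with rfl | hv0
    · simp
    refine (hinfsup v hv hv0).trans (Real.sSup_le ?_ (norm_nonneg _))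
    rintro r ⟨w, hwZ, -, rfl⟩
    exact abs_real_inner_div_norm_le_of_inner_sub_eq_zero (hPorth v _ (hW ▸ ⟨w, hwZ, rfl⟩))
  have hspectral : ∀ v ∈ U, c ^ 2 * ‖v‖ ^ 2 ≤ ⟪P v, v⟫ ∧ ⟪P v, v⟫ ≤ ‖v‖ ^ 2 := by
    intro v hv
    rw [real_inner_eq_norm_sq_of_inner_sub_eq_zero (hresidual v), ← mul_pow]
    exact ⟨pow_le_pow_left₀ (by positivity) (hlower v hv) 2,
      pow_le_pow_left₀ (norm_nonneg _) (norm_le_of_inner_sub_eq_zero (hresidual v)) 2⟩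
  refine ⟨hspectral, fun v hv hdegenerate => ?_⟩
  have hle := (hspectral v hv).1
  rw [hdegenerate v hv] at hle
  have hsq : ‖v‖ ^ 2 ≤ 0 := nonpos_of_mul_nonpos_right hle (by positivity)
  exact norm_eq_zero.mp (pow_eq_zero_iff two_ne_zero |>.mp (le_antisymm hsq (by positivity)))

/-- The inf-sup condition implies the spectral equivalence
`c²‖v‖² ≤ ⟪P v, v⟫ ≤ ‖v‖²` on `U`; in particular the form `⟪P·,·⟫` is
nondegenerate on `U`. -/
theorem infsup_implies_spectral_equivalence
    {H : Type*} [NormedAddCommGroup H] [InnerProductSpace ℝ H] [CompleteSpace H]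
    (T : H →ₗ.[ℝ] H) (hdense : Dense (T.domain : Set H)) (hclosed : T.IsClosed)
    (Z : Submodule ℝ T.adjoint.domain) [FiniteDimensional ℝ Z]
    (W : Submodule ℝ H) (hW : W = Z.map T.adjoint.toFun)
    (P : H →ₗ[ℝ] H) (hPmem : ∀ q : H, P q ∈ W)
    (hPorth : ∀ q : H, ∀ w ∈ W, ⟪q - P q, w⟫ = 0)
    (U : Submodule ℝ H) [FiniteDimensional ℝ U]
    (c : ℝ) (hc : 0 < c)
    (hinfsup : ∀ v ∈ U, v ≠ 0 →
      c * ‖v‖ ≤ sSup {r : ℝ | ∃ w : T.adjoint.domain, w ∈ Z ∧ T.adjoint w ≠ 0 ∧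
        r = |⟪v, T.adjoint w⟫| / ‖T.adjoint w‖}) :
    (∀ v ∈ U, c ^ 2 * ‖v‖ ^ 2 ≤ ⟪P v, v⟫ ∧ ⟪P v, v⟫ ≤ ‖v‖ ^ 2) ∧
    (∀ v ∈ U, (∀ u ∈ U, ⟪P v, u⟫ = 0) → v = 0) :=
  infsup_implies_spectral_equivalence_general T Z W hW P hPmem hPorth U c hc hinfsup
end

section
/- Let 0 < c ≤ 1. The inf-sup condition — for every nonzero v ∈ U, the supremum over w ∈ Z with T*w ≠ 0 of |⟨v, T*w⟩| / ‖T*w‖ is at least c‖v‖ — holds if and only if the sup-inf condition holds: ‖v − P v‖ ≤ √(1 − c²) · ‖v‖ for all v ∈ U. -/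
open scoped RealInnerProductSpace

/-!
Since `v - P v ⊥ W`, the ratio `|⟪v, u⟫| / ‖u‖` over nonzero `u ∈ W` is at most `‖P v‖`
(Cauchy–Schwarz) and attains it at `u = P v`, so the inf-sup quantity is `‖P v‖`.
Pythagoras, `‖v - P v‖² + ‖P v‖² = ‖v‖²`, then turns `c ‖v‖ ≤ ‖P v‖` into the sup-inf bound.
-/

section

variable {F : Type*} [NormedAddCommGroup F] [InnerProductSpace ℝ F]

theorem norm_sub_sq_add_norm_sq_of_inner_sub_eq_zero {v p : F} (h : ⟪v - p, p⟫ = 0) :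
    ‖v - p‖ ^ 2 + ‖p‖ ^ 2 = ‖v‖ ^ 2 := by
  have hpyth := norm_add_sq_eq_norm_sq_add_norm_sq_real h
  rw [sub_add_cancel] at hpyth
  rw [sq, sq, sq, hpyth]

theorem sSup_abs_inner_div_norm_eq_norm {W : Submodule ℝ F} {v p : F} (hp : p ∈ W)
    (horth : ∀ w ∈ W, ⟪v - p, w⟫ = 0) :
    sSup ((fun u => |⟪v, u⟫| / ‖u‖) '' {u | u ∈ W ∧ u ≠ 0}) = ‖p‖ := by
  have hinner : ∀ u ∈ W, ⟪v, u⟫ = ⟪p, u⟫ := fun u hu => by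
    rw [← sub_eq_zero, ← inner_sub_left, horth u hu]
  have hbound : ∀ r ∈ (fun u => |⟪v, u⟫| / ‖u‖) '' {u | u ∈ W ∧ u ≠ 0}, r ≤ ‖p‖ := by
    rintro _ ⟨u, ⟨hu, hu0⟩, rfl⟩
    dsimp only
    rw [hinner u hu, div_le_iff₀ (norm_pos_iff.mpr hu0)]
    exact abs_real_inner_le_norm p u
  refine le_antisymm (Real.sSup_le hbound (norm_nonneg p)) ?_
  rcases eq_or_ne p 0 with rfl | hp0
  · rw [norm_zero]
    exact Real.sSup_nonneg (by rintro _ ⟨u, -, rfl⟩; positivity)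
  · refine le_csSup ⟨‖p‖, hbound⟩ ⟨p, ⟨hp, hp0⟩, ?_⟩
    have hnorm : ‖p‖ ≠ 0 := norm_ne_zero_iff.mpr hp0
    simp only [hinner p hp, real_inner_self_eq_norm_sq, abs_sq]
    field_simp

end

theorem mul_le_iff_le_sqrt_one_sub_sq_mul {a b n c : ℝ} (ha : 0 ≤ a) (hb : 0 ≤ b) (hn : 0 ≤ n)
    (hc0 : 0 ≤ c) (hc1 : c ≤ 1) (habn : a ^ 2 + b ^ 2 = n ^ 2) :
    c * n ≤ b ↔ a ≤ √(1 - c ^ 2) * n := by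
  have hc2 : 0 ≤ 1 - c ^ 2 := by nlinarith
  rw [← pow_le_pow_iff_left₀ (by positivity) hb two_ne_zero,
    ← pow_le_pow_iff_left₀ ha (by positivity) two_ne_zero, mul_pow, mul_pow, Real.sq_sqrt hc2]
  constructor <;> intro h <;> nlinarith

theorem infsup_iff_supinf_general
    {H : Type*} [NormedAddCommGroup H] [InnerProductSpace ℝ H] [CompleteSpace H]
    (T : H →ₗ.[ℝ] H)
    (Z : Submodule ℝ T.adjoint.domain)
    (W : Submodule ℝ H) (hW : W = Z.map T.adjoint.toFun)
    (P : H →ₗ[ℝ] H) (hPmem : ∀ q : H, P q ∈ W)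
    (hPorth : ∀ q : H, ∀ w ∈ W, ⟪q - P q, w⟫ = 0)
    (U : Submodule ℝ H)
    (c : ℝ) (hc0 : 0 < c) (hc1 : c ≤ 1) :
    (∀ v ∈ U, v ≠ 0 →
      c * ‖v‖ ≤ sSup {r : ℝ | ∃ w : T.adjoint.domain, w ∈ Z ∧ T.adjoint w ≠ 0 ∧
        r = |⟪v, T.adjoint w⟫| / ‖T.adjoint w‖}) ↔
    (∀ v ∈ U, ‖v - P v‖ ≤ Real.sqrt (1 - c ^ 2) * ‖v‖) := by
  have hsup : ∀ v : H, sSup {r : ℝ | ∃ w : T.adjoint.domain, w ∈ Z ∧ T.adjoint w ≠ 0 ∧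
      r = |⟪v, T.adjoint w⟫| / ‖T.adjoint w‖} = ‖P v‖ := fun v => by
    rw [← sSup_abs_inner_div_norm_eq_norm (hPmem v) (hPorth v), hW]
    congr 1
    ext r
    simp only [Set.mem_ofPred_eq, Set.mem_image, Submodule.mem_map]
    constructor
    · rintro ⟨w, hwZ, hw0, rfl⟩
      exact ⟨_, ⟨⟨w, hwZ, rfl⟩, hw0⟩, rfl⟩
    · rintro ⟨_, ⟨⟨w, hwZ, rfl⟩, hw0⟩, rfl⟩
      exact ⟨w, hwZ, hw0, rfl⟩
  have hiff : ∀ v : H, c * ‖v‖ ≤ ‖P v‖ ↔ ‖v - P v‖ ≤ √(1 - c ^ 2) * ‖v‖ := fun v =>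
    mul_le_iff_le_sqrt_one_sub_sq_mul (norm_nonneg _) (norm_nonneg _) (norm_nonneg _) hc0.le hc1
      (norm_sub_sq_add_norm_sq_of_inner_sub_eq_zero (hPorth v _ (hPmem v)))
  refine forall₂_congr fun v _ => ?_
  rw [hsup v, ← hiff v]
  refine ⟨fun h => ?_, fun h _ => h⟩
  rcases eq_or_ne v 0 with rfl | hv0
  · simp
  · exact h hv0

/-- For `0 < c ≤ 1`, the inf-sup condition with constant `c` holds on
`U` if and only if the sup-inf condition `‖v − P v‖ ≤ √(1 − c²)‖v‖` holds on `U`. -/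
theorem infsup_iff_supinf
    {H : Type*} [NormedAddCommGroup H] [InnerProductSpace ℝ H] [CompleteSpace H]
    (T : H →ₗ.[ℝ] H) (hdense : Dense (T.domain : Set H)) (hclosed : T.IsClosed)
    (Z : Submodule ℝ T.adjoint.domain) [FiniteDimensional ℝ Z]
    (W : Submodule ℝ H) (hW : W = Z.map T.adjoint.toFun)
    (P : H →ₗ[ℝ] H) (hPmem : ∀ q : H, P q ∈ W)
    (hPorth : ∀ q : H, ∀ w ∈ W, ⟪q - P q, w⟫ = 0)
    (U : Submodule ℝ H) [FiniteDimensional ℝ U]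
    (c : ℝ) (hc0 : 0 < c) (hc1 : c ≤ 1) :
    (∀ v ∈ U, v ≠ 0 →
      c * ‖v‖ ≤ sSup {r : ℝ | ∃ w : T.adjoint.domain, w ∈ Z ∧ T.adjoint w ≠ 0 ∧
        r = |⟪v, T.adjoint w⟫| / ‖T.adjoint w‖}) ↔
    (∀ v ∈ U, ‖v - P v‖ ≤ Real.sqrt (1 - c ^ 2) * ‖v‖) :=
  infsup_iff_supinf_general T Z W hW P hPmem hPorth U c hc0 hc1
end

section
/- Suppose the inf-sup condition holds with constant c > 0: for every nonzero v ∈ U, the supremum over w ∈ Z with T*w ≠ 0 of |⟨v, T*w⟩| / ‖T*w‖ is at least c‖v‖. Let û ∈ H and let u ∈ U be the (LL*)⁻¹ approximation, i.e., ⟨P u, v⟩ = ⟨P û, v⟩ for all v ∈ U. Then ‖u − û‖ ≤ (1 + 1/c) · inf over v ∈ U of ‖v − û‖. -/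
/-!
Since `W` is finite-dimensional, `P` is the orthogonal projection onto `W`, so it is
self-adjoint, idempotent and contractive. Testing `v ∈ U` against `T* w` only sees `P v`,
so the inf-sup condition says `c ‖v‖ ≤ ‖P v‖` on `U`. Galerkin orthogonality
`⟪P (u - û), v⟫ = 0` then gives `‖P (u - v)‖ ≤ ‖v - û‖` for every `v ∈ U`, hence
`‖u - v‖ ≤ ‖v - û‖ / c`, and the triangle inequality finishes.
-/

open scoped RealInnerProductSpace

namespace Submodule

variable {E : Type*} [NormedAddCommGroup E] [InnerProductSpace ℝ E]
  (K : Submodule ℝ E) [K.HasOrthogonalProjection]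

theorem abs_inner_div_norm_le_norm_starProjection (v : E) {w : E} (hw : w ∈ K) :
    |⟪v, w⟫| / ‖w‖ ≤ ‖K.starProjection v‖ := by
  have hinner : ⟪v, w⟫ = ⟪K.starProjection v, w⟫ := by
    rw [K.inner_starProjection_left_eq_right, K.starProjection_eq_self_iff.mpr hw]
  rw [hinner]
  exact div_le_of_le_mul₀ (norm_nonneg _) (norm_nonneg _) (abs_real_inner_le_norm _ _)

theorem inner_starProjection_left_eq_inner_starProjection (u v : E) :
    ⟪K.starProjection u, v⟫ = ⟪K.starProjection u, K.starProjection v⟫ := by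
  rw [← K.inner_starProjection_left_eq_right,
    K.starProjection_eq_self_iff.mpr (K.starProjection_apply_mem u)]

theorem norm_starProjection_sq (v : E) :
    ‖K.starProjection v‖ ^ 2 = ⟪K.starProjection v, v⟫ := by
  rw [← real_inner_self_eq_norm_sq, K.inner_starProjection_left_eq_inner_starProjection v v]

variable {K} {U : Submodule ℝ E} {uhat u : E}

theorem norm_starProjection_sub_le_of_galerkin (hu : u ∈ U)
    (hweak : ∀ v ∈ U, ⟪K.starProjection u, v⟫ = ⟪K.starProjection uhat, v⟫)
    {v : E} (hv : v ∈ U) :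
    ‖K.starProjection (u - v)‖ ≤ ‖v - uhat‖ := by
  set e := K.starProjection (u - v)
  have horth : ⟪K.starProjection (u - uhat), u - v⟫ = 0 := by
    rw [map_sub, inner_sub_left, hweak _ (U.sub_mem hu hv), sub_self]
  have hsq : ‖e‖ ^ 2 ≤ ‖v - uhat‖ * ‖e‖ :=
    calc ‖e‖ ^ 2
        = ⟪K.starProjection (u - uhat), u - v⟫ + ⟪K.starProjection (uhat - v), u - v⟫ := by
          rw [K.norm_starProjection_sq, ← inner_add_left, ← map_add, sub_add_sub_cancel]
      _ = ⟪K.starProjection (uhat - v), e⟫ := by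
          rw [horth, zero_add, K.inner_starProjection_left_eq_inner_starProjection]
      _ ≤ ‖K.starProjection (uhat - v)‖ * ‖e‖ := real_inner_le_norm _ _
      _ ≤ ‖v - uhat‖ * ‖e‖ := by
          rw [← norm_sub_rev uhat v]
          gcongr
          exact K.norm_starProjection_apply_le _
  nlinarith [norm_nonneg e, norm_nonneg (v - uhat)]

theorem norm_sub_le_mul_iInf_of_galerkin {c : ℝ} (hc : 0 < c)
    (hstab : ∀ v ∈ U, c * ‖v‖ ≤ ‖K.starProjection v‖) (hu : u ∈ U)
    (hweak : ∀ v ∈ U, ⟪K.starProjection u, v⟫ = ⟪K.starProjection uhat, v⟫) :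
    ‖u - uhat‖ ≤ (1 + 1 / c) * ⨅ v : U, ‖(v : E) - uhat‖ := by
  rw [Real.mul_iInf_of_nonneg (by positivity)]
  refine le_ciInf fun ⟨v, hv⟩ => ?_
  have hcv : c * ‖u - v‖ ≤ ‖v - uhat‖ :=
    (hstab _ (U.sub_mem hu hv)).trans (norm_starProjection_sub_le_of_galerkin hu hweak hv)
  calc ‖u - uhat‖ ≤ ‖u - v‖ + ‖v - uhat‖ := norm_sub_le_norm_sub_add_norm_sub _ _ _
    _ ≤ ‖v - uhat‖ / c + ‖v - uhat‖ := by gcongr; rwa [le_div_iff₀' hc]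
    _ = (1 + 1 / c) * ‖v - uhat‖ := by ring

end Submodule

theorem llstar_inv_error_estimate_general
    {H : Type*} [NormedAddCommGroup H] [InnerProductSpace ℝ H] [CompleteSpace H]
    (T : H →ₗ.[ℝ] H)
    (Z : Submodule ℝ T.adjoint.domain) [FiniteDimensional ℝ Z]
    (W : Submodule ℝ H) (hW : W = Z.map T.adjoint.toFun)
    (P : H →ₗ[ℝ] H) (hPmem : ∀ q : H, P q ∈ W)
    (hPorth : ∀ q : H, ∀ w ∈ W, ⟪q - P q, w⟫ = 0)
    (U : Submodule ℝ H)
    (c : ℝ) (hc : 0 < c)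
    (hinfsup : ∀ v ∈ U, v ≠ 0 →
      c * ‖v‖ ≤ sSup {r : ℝ | ∃ w : T.adjoint.domain, w ∈ Z ∧ T.adjoint w ≠ 0 ∧
        r = |⟪v, T.adjoint w⟫| / ‖T.adjoint w‖})
    (uhat u : H) (hu : u ∈ U)
    (hweak : ∀ v ∈ U, ⟪P u, v⟫ = ⟪P uhat, v⟫) :
    ‖u - uhat‖ ≤ (1 + 1 / c) * ⨅ v : U, ‖(v : H) - uhat‖ := by
  have : W.HasOrthogonalProjection := by subst hW; infer_instance
  have hP : ∀ q, P q = W.starProjection q := fun q =>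
    (W.eq_starProjection_of_mem_of_inner_eq_zero (hPmem q) (hPorth q)).symm
  simp only [hP] at hweak
  refine Submodule.norm_sub_le_mul_iInf_of_galerkin hc (fun v hv => ?_) hu hweak
  rcases eq_or_ne v 0 with rfl | hv0
  · simp
  refine (hinfsup v hv hv0).trans (Real.sSup_le ?_ (norm_nonneg _))
  rintro r ⟨w, hwZ, -, rfl⟩
  exact W.abs_inner_div_norm_le_norm_starProjection v (hW ▸ ⟨w, hwZ, rfl⟩)

/-- error estimate for the (LL*)⁻¹ method: under the inf-sup
condition with constant `c > 0`, if `u ∈ U` satisfies `⟪P u, v⟫ = ⟪P û, v⟫` for all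
`v ∈ U`, then `‖u − û‖ ≤ (1 + 1/c) inf_{v ∈ U} ‖v − û‖`. -/
theorem llstar_inv_error_estimate
    {H : Type*} [NormedAddCommGroup H] [InnerProductSpace ℝ H] [CompleteSpace H]
    (T : H →ₗ.[ℝ] H) (hdense : Dense (T.domain : Set H)) (hclosed : T.IsClosed)
    (Z : Submodule ℝ T.adjoint.domain) [FiniteDimensional ℝ Z]
    (W : Submodule ℝ H) (hW : W = Z.map T.adjoint.toFun)
    (P : H →ₗ[ℝ] H) (hPmem : ∀ q : H, P q ∈ W)
    (hPorth : ∀ q : H, ∀ w ∈ W, ⟪q - P q, w⟫ = 0)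
    (U : Submodule ℝ H) [FiniteDimensional ℝ U]
    (c : ℝ) (hc : 0 < c)
    (hinfsup : ∀ v ∈ U, v ≠ 0 →
      c * ‖v‖ ≤ sSup {r : ℝ | ∃ w : T.adjoint.domain, w ∈ Z ∧ T.adjoint w ≠ 0 ∧
        r = |⟪v, T.adjoint w⟫| / ‖T.adjoint w‖})
    (uhat u : H) (hu : u ∈ U)
    (hweak : ∀ v ∈ U, ⟪P u, v⟫ = ⟪P uhat, v⟫) :
    ‖u - uhat‖ ≤ (1 + 1 / c) * ⨅ v : U, ‖(v : H) - uhat‖ :=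
  llstar_inv_error_estimate_general T Z W hW P hPmem hPorth U c hc hinfsup uhat u hu hweak
end

section
/- Let s ≥ 1, let U be a closed subspace of H, let û ∈ H, and let u ∈ U satisfy the weak problem of the single-stage (s = (ω+1)/ω) or two-stage (s = 1) method: s·⟨u − P u, v⟩ + ⟨P u, v⟩ = ⟨P û, v⟩ for all v ∈ U. Then ‖u − û‖ ≤ s · (inf over v ∈ U of ‖v − û‖) + (s + 1) · (inf over w ∈ Z of ‖T*w − û‖). -/
/-!
Write `e = u - û`, `d = v - û` for `v ∈ U`, and `δ = ‖û - Pû‖`, the distance from `û` to `W`.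
In terms of `e` the weak problem reads `⟪e, y⟫ + (s - 1)⟪e - Pe, y⟫ = s⟪Pû - û, y⟫` for `y ∈ U`.
Testing with `y = e - d ∈ U` and using `⟪e - Pe, e⟫ = ‖e - Pe‖² ≥ 0`, `‖e - Pe‖ ≤ ‖e‖` and
Cauchy–Schwarz gives `‖e‖² ≤ s‖e‖‖d‖ + sδ‖e‖ + sδ‖d‖`, which forces `‖e‖ ≤ s‖d‖ + (s + 1)δ`.
Finally `T*Z ⊆ W`, so `δ ≤ ‖T*w - û‖` for every `w ∈ Z`.
-/

open scoped RealInnerProductSpace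

-- `x² - sxD - sδx - sδD = (x - (sD + (s + 1)δ))(x + δ) + (s + 1)δ²`
lemma le_of_sq_le_mul_add {x D δ s : ℝ} (hD : 0 ≤ D) (hδ : 0 ≤ δ) (hs : 0 ≤ s)
    (h : x ^ 2 ≤ s * x * D + s * δ * x + s * δ * D) : x ≤ s * D + (s + 1) * δ := by
  refine le_of_not_gt fun hlt => ?_
  have hR : 0 ≤ s * D + (s + 1) * δ := by positivity
  nlinarith [mul_pos (sub_pos.2 hlt) (by linarith : 0 < x + δ),
    mul_nonneg (by linarith : 0 ≤ s + 1) (sq_nonneg δ)]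

section OrthogonalProjection

variable {E : Type*} [NormedAddCommGroup E] [InnerProductSpace ℝ E] {K : Submodule ℝ E}

lemma norm_sub_apply_le_norm_sub {P : E → E} (hPmem : ∀ x, P x ∈ K)
    (hPorth : ∀ x, ∀ w ∈ K, ⟪x - P x, w⟫ = 0) (x : E) {q : E} (hq : q ∈ K) :
    ‖x - P x‖ ≤ ‖x - q‖ := by
  rw [(K.norm_eq_iInf_iff_real_inner_eq_zero (hPmem x)).2 (hPorth x)]
  exact ciInf_le ⟨0, Set.forall_mem_range.2 fun _ => norm_nonneg _⟩ (⟨q, hq⟩ : K)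

lemma norm_sub_apply_le_norm {P : E → E} (hPmem : ∀ x, P x ∈ K)
    (hPorth : ∀ x, ∀ w ∈ K, ⟪x - P x, w⟫ = 0) (x : E) : ‖x - P x‖ ≤ ‖x‖ := by
  simpa using norm_sub_apply_le_norm_sub hPmem hPorth x K.zero_mem

lemma inner_sub_apply_self {P : E → E} (hPmem : ∀ x, P x ∈ K)
    (hPorth : ∀ x, ∀ w ∈ K, ⟪x - P x, w⟫ = 0) (x : E) : ⟪x - P x, x⟫ = ‖x - P x‖ ^ 2 := by
  calc ⟪x - P x, x⟫ = ⟪x - P x, x - P x⟫ + ⟪x - P x, P x⟫ := by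
        rw [← inner_add_right, sub_add_cancel]
    _ = ‖x - P x‖ ^ 2 := by rw [hPorth x _ (hPmem x), add_zero, real_inner_self_eq_norm_sq]

end OrthogonalProjection

section WeakProblem

variable {E : Type*} [NormedAddCommGroup E] [InnerProductSpace ℝ E] {K U : Submodule ℝ E}
  {P : E →ₗ[ℝ] E} {s : ℝ} {uhat u : E}

lemma sq_norm_sub_le_of_weak (hPmem : ∀ x, P x ∈ K) (hPorth : ∀ x, ∀ w ∈ K, ⟪x - P x, w⟫ = 0)
    (hs : 1 ≤ s) (hu : u ∈ U) (hweak : ∀ v ∈ U, s * ⟪u - P u, v⟫ + ⟪P u, v⟫ = ⟪P uhat, v⟫)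
    {v : E} (hv : v ∈ U) :
    ‖u - uhat‖ ^ 2 ≤ s * ‖u - uhat‖ * ‖v - uhat‖ + s * ‖uhat - P uhat‖ * ‖u - uhat‖ +
      s * ‖uhat - P uhat‖ * ‖v - uhat‖ := by
  set e := u - uhat with he
  set d := v - uhat with hd
  have hgalerkin : ⟪e, e - d⟫ + (s - 1) * ⟪e - P e, e - d⟫ = s * ⟪P uhat - uhat, e - d⟫ := by
    have huv : u - v = e - d := by rw [he, hd]; abel
    have h := hweak (u - v) (U.sub_mem hu hv)
    rw [huv] at h
    simp only [he, map_sub, inner_sub_left] at h ⊢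
    linear_combination h
  clear_value e d
  have hed : ⟪e, d⟫ ≤ ‖e‖ * ‖d‖ := real_inner_le_norm e d
  have hPed : ⟪e - P e, d⟫ ≤ ‖e‖ * ‖d‖ := (real_inner_le_norm _ _).trans
    (mul_le_mul_of_nonneg_right (norm_sub_apply_le_norm hPmem hPorth e) (norm_nonneg d))
  have hδ : ⟪P uhat - uhat, e - d⟫ ≤ ‖uhat - P uhat‖ * (‖e‖ + ‖d‖) := by
    calc ⟪P uhat - uhat, e - d⟫ ≤ ‖uhat - P uhat‖ * ‖e - d‖ := by
          rw [← norm_sub_rev]; exact real_inner_le_norm _ _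
      _ ≤ ‖uhat - P uhat‖ * (‖e‖ + ‖d‖) := by gcongr; exact norm_sub_le e d
  have hPee : 0 ≤ ⟪e - P e, e⟫ := by
    rw [inner_sub_apply_self hPmem hPorth]; positivity
  rw [inner_sub_right, inner_sub_right, real_inner_self_eq_norm_sq] at hgalerkin
  linarith [mul_le_mul_of_nonneg_left hPed (by linarith : 0 ≤ s - 1),
    mul_le_mul_of_nonneg_left hδ (by linarith : 0 ≤ s), mul_nonneg (by linarith : 0 ≤ s - 1) hPee]

lemma norm_sub_le_of_weak (hPmem : ∀ x, P x ∈ K) (hPorth : ∀ x, ∀ w ∈ K, ⟪x - P x, w⟫ = 0)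
    (hs : 1 ≤ s) (hu : u ∈ U) (hweak : ∀ v ∈ U, s * ⟪u - P u, v⟫ + ⟪P u, v⟫ = ⟪P uhat, v⟫)
    {v : E} (hv : v ∈ U) : ‖u - uhat‖ ≤ s * ‖v - uhat‖ + (s + 1) * ‖uhat - P uhat‖ :=
  le_of_sq_le_mul_add (norm_nonneg _) (norm_nonneg _) (by linarith)
    (sq_norm_sub_le_of_weak hPmem hPorth hs hu hweak hv)

end WeakProblem

theorem stage_methods_error_estimate_general
    {H : Type*} [NormedAddCommGroup H] [InnerProductSpace ℝ H] [CompleteSpace H]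
    (T : H →ₗ.[ℝ] H)
    (Z : Submodule ℝ T.adjoint.domain)
    (W : Submodule ℝ H) (hW : W = Z.map T.adjoint.toFun)
    (P : H →ₗ[ℝ] H) (hPmem : ∀ q : H, P q ∈ W)
    (hPorth : ∀ q : H, ∀ w ∈ W, ⟪q - P q, w⟫ = 0)
    (s : ℝ) (hs : 1 ≤ s)
    (U : Submodule ℝ H)
    (uhat u : H) (hu : u ∈ U)
    (hweak : ∀ v ∈ U, s * ⟪u - P u, v⟫ + ⟪P u, v⟫ = ⟪P uhat, v⟫) :
    ‖u - uhat‖ ≤ s * (⨅ v : U, ‖(v : H) - uhat‖) +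
      (s + 1) * (⨅ w : Z, ‖T.adjoint (w : T.adjoint.domain) - uhat‖) := by
  have hZ : ‖uhat - P uhat‖ ≤ ⨅ w : Z, ‖T.adjoint (w : T.adjoint.domain) - uhat‖ :=
    le_ciInf fun w => (norm_sub_apply_le_norm_sub hPmem hPorth uhat
      (by rw [hW]; exact ⟨w, w.2, rfl⟩)).trans_eq (norm_sub_rev _ _)
  have hU : ‖u - uhat‖ - (s + 1) * ‖uhat - P uhat‖ ≤ s * ⨅ v : U, ‖(v : H) - uhat‖ := by
    rw [Real.mul_iInf_of_nonneg (by linarith)]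
    exact le_ciInf fun v => by linarith [norm_sub_le_of_weak hPmem hPorth hs hu hweak v.2]
  linarith [mul_le_mul_of_nonneg_left hZ (by linarith : 0 ≤ s + 1)]

/-- error estimate for the single- and two-stage methods: for `s ≥ 1`,
if `u ∈ U` satisfies `s⟪u − Pu, v⟫ + ⟪Pu, v⟫ = ⟪Pû, v⟫` for all `v ∈ U`, then
`‖u − û‖ ≤ s inf_{v ∈ U} ‖v − û‖ + (s+1) inf_{w ∈ Z} ‖T†w − û‖`. -/
theorem stage_methods_error_estimate
    {H : Type*} [NormedAddCommGroup H] [InnerProductSpace ℝ H] [CompleteSpace H]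
    (T : H →ₗ.[ℝ] H) (hdense : Dense (T.domain : Set H)) (hclosed : T.IsClosed)
    (Z : Submodule ℝ T.adjoint.domain) [FiniteDimensional ℝ Z]
    (W : Submodule ℝ H) (hW : W = Z.map T.adjoint.toFun)
    (P : H →ₗ[ℝ] H) (hPmem : ∀ q : H, P q ∈ W)
    (hPorth : ∀ q : H, ∀ w ∈ W, ⟪q - P q, w⟫ = 0)
    (s : ℝ) (hs : 1 ≤ s)
    (U : Submodule ℝ H) (hUclosed : IsClosed (U : Set H))
    (uhat u : H) (hu : u ∈ U)
    (hweak : ∀ v ∈ U, s * ⟪u - P u, v⟫ + ⟪P u, v⟫ = ⟪P uhat, v⟫) :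
    ‖u - uhat‖ ≤ s * (⨅ v : U, ‖(v : H) - uhat‖) +
      (s + 1) * (⨅ w : Z, ‖T.adjoint (w : T.adjoint.domain) - uhat‖) :=
  stage_methods_error_estimate_general T Z W hW P hPmem hPorth s hs U uhat u hu hweak
end

section
/- Let s ≥ 1, let U be a closed subspace of H, let û ∈ H, and let u ∈ U satisfy s·⟨u − P u, v⟩ + ⟨P u, v⟩ = ⟨P û, v⟩ for all v ∈ U. Then the quasi-optimality estimate with respect to the projected exact solution holds: ‖u − P û‖ ≤ s · ‖v − P û‖ for every v ∈ U. (Moreover, the underlying bilinear form a_s(p, q) = s⟨(I − P)p, q⟩ + ⟨P p, q⟩ satisfies ‖q‖² ≤ a_s(q, q) ≤ s‖q‖² for all q ∈ H.) -/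
open scoped RealInnerProductSpace

/-- for `s ≥ 1`, if `u ∈ U` satisfies
`s⟪u − Pu, v⟫ + ⟪Pu, v⟫ = ⟪Pû, v⟫` for all `v ∈ U`, then
`‖u − Pû‖ ≤ s‖v − Pû‖` for every `v ∈ U`; moreover the bilinear form
`a_s(p, q) = s⟪(I − P)p, q⟫ + ⟪Pp, q⟫` satisfies `‖q‖² ≤ a_s(q,q) ≤ s‖q‖²`. -/
theorem stage_methods_quasi_optimality
    {H : Type*} [NormedAddCommGroup H] [InnerProductSpace ℝ H] [CompleteSpace H]
    (T : H →ₗ.[ℝ] H) (hdense : Dense (T.domain : Set H)) (hclosed : T.IsClosed)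
    (Z : Submodule ℝ T.adjoint.domain) [FiniteDimensional ℝ Z]
    (W : Submodule ℝ H) (hW : W = Z.map T.adjoint.toFun)
    (P : H →ₗ[ℝ] H) (hPmem : ∀ q : H, P q ∈ W)
    (hPorth : ∀ q : H, ∀ w ∈ W, ⟪q - P q, w⟫ = 0)
    (s : ℝ) (hs : 1 ≤ s)
    (U : Submodule ℝ H) (hUclosed : IsClosed (U : Set H))
    (uhat u : H) (hu : u ∈ U)
    (hweak : ∀ v ∈ U, s * ⟪u - P u, v⟫ + ⟪P u, v⟫ = ⟪P uhat, v⟫) :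
    (∀ v ∈ U, ‖u - P uhat‖ ≤ s * ‖v - P uhat‖) ∧
    (∀ q : H, ‖q‖ ^ 2 ≤ s * ⟪q - P q, q⟫ + ⟪P q, q⟫ ∧
      s * ⟪q - P q, q⟫ + ⟪P q, q⟫ ≤ s * ‖q‖ ^ 2) := by
  -- P is idempotent
  have hPP : ∀ q : H, P (P q) = P q := by
    intro q
    have hmem : P q - P (P q) ∈ W := W.sub_mem (hPmem q) (hPmem (P q))
    have h1 : ⟪P q - P (P q), P q - P (P q)⟫ = 0 := hPorth (P q) _ hmem
    have h2 : P q - P (P q) = 0 := inner_self_eq_zero.mp h1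
    have := sub_eq_zero.mp h2
    exact this.symm
  -- orthogonality against projections
  have horth : ∀ p q : H, ⟪p - P p, P q⟫ = 0 := fun p q => hPorth p _ (hPmem q)
  -- ⟪q - Pq, q⟫ = ‖q - Pq‖²
  have hA : ∀ q : H, ⟪q - P q, q⟫ = ‖q - P q‖ ^ 2 := by
    intro q
    have : ⟪q - P q, q⟫ = ⟪q - P q, q - P q⟫ + ⟪q - P q, P q⟫ := by
      rw [← inner_add_right]; congr 1; abel
    rw [this, horth, real_inner_self_eq_norm_sq]; ring
  -- ⟪Pq, q⟫ = ‖Pq‖²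
  have hB : ∀ q : H, ⟪P q, q⟫ = ‖P q‖ ^ 2 := by
    intro q
    have h0 : ⟪P q, q - P q⟫ = 0 := by
      rw [real_inner_comm]; exact horth q q
    have : ⟪P q, q⟫ = ⟪P q, q - P q⟫ + ⟪P q, P q⟫ := by
      rw [← inner_add_right]; congr 1; abel
    rw [this, h0, real_inner_self_eq_norm_sq]; ring
  -- Pythagoras
  have hnorm : ∀ q : H, ‖q‖ ^ 2 = ‖q - P q‖ ^ 2 + ‖P q‖ ^ 2 := by
    intro q
    have : ⟪q, q⟫ = ⟪q - P q, q⟫ + ⟪P q, q⟫ := by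
      rw [← inner_add_left]; congr 1; abel
    rw [← real_inner_self_eq_norm_sq, this, hA, hB]
  constructor
  · intro v hv
    set e := u - P uhat with he
    set d := v - P uhat with hd
    -- compute P e and e - P e
    have hPe : P e = P u - P uhat := by
      rw [he, map_sub, hPP]
    have hePe : e - P e = u - P u := by
      rw [he, hPe]; abel
    -- Galerkin orthogonality
    have hgal : ∀ w ∈ U, s * ⟪e - P e, w⟫ + ⟪P e, w⟫ = 0 := by
      intro w hw
      have h := hweak w hw
      have h2 : ⟪P e, w⟫ = ⟪P u, w⟫ - ⟪P uhat, w⟫ := by rw [hPe, inner_sub_left]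
      rw [hePe, h2]; linarith
    -- key: with w = u - v
    have hw : u - v ∈ U := U.sub_mem hu hv
    have hkey : s * ⟪e - P e, e⟫ + ⟪P e, e⟫ = s * ⟪e - P e, d⟫ + ⟪P e, d⟫ := by
      have hgw := hgal (u - v) hw
      have h1 : ⟪e - P e, e⟫ = ⟪e - P e, u - v⟫ + ⟪e - P e, d⟫ := by
        rw [← inner_add_right]
        congr 1
        rw [he, hd]; abel
      have h2 : ⟪P e, e⟫ = ⟪P e, u - v⟫ + ⟪P e, d⟫ := by
        rw [← inner_add_right]
        congr 1
        rw [he, hd]; abel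
      rw [h1, h2]; ring_nf; linarith [hgw]
    -- coercivity
    have hcoer : ‖e‖ ^ 2 ≤ s * ⟪e - P e, e⟫ + ⟪P e, e⟫ := by
      rw [hA, hB, hnorm e]
      nlinarith [sq_nonneg ‖e - P e‖]
    -- continuity on the right side
    have hsplit1 : ⟪e - P e, d⟫ = ⟪e - P e, d - P d⟫ := by
      have : ⟪e - P e, d⟫ = ⟪e - P e, d - P d⟫ + ⟪e - P e, P d⟫ := by
        rw [← inner_add_right]; congr 1; abel
      rw [this, horth]; ring
    have hsplit2 : ⟪P e, d⟫ = ⟪P e, P d⟫ := by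
      have h0 : ⟪P e, d - P d⟫ = 0 := by
        rw [real_inner_comm]; exact horth d e
      have : ⟪P e, d⟫ = ⟪P e, d - P d⟫ + ⟪P e, P d⟫ := by
        rw [← inner_add_right]; congr 1; abel
      rw [this, h0]; ring
    have hcs1 : ⟪e - P e, d - P d⟫ ≤ ‖e - P e‖ * ‖d - P d‖ := real_inner_le_norm _ _
    have hcs2 : ⟪P e, P d⟫ ≤ ‖P e‖ * ‖P d‖ := real_inner_le_norm _ _
    have hbound : s * ⟪e - P e, d⟫ + ⟪P e, d⟫ ≤ s * (‖e‖ * ‖d‖) := by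
      rw [hsplit1, hsplit2]
      have h2d : ‖e - P e‖ * ‖d - P d‖ + ‖P e‖ * ‖P d‖ ≤ ‖e‖ * ‖d‖ := by
        have hne : ‖e‖ ^ 2 = ‖e - P e‖ ^ 2 + ‖P e‖ ^ 2 := hnorm e
        have hnd : ‖d‖ ^ 2 = ‖d - P d‖ ^ 2 + ‖P d‖ ^ 2 := hnorm d
        nlinarith [sq_nonneg (‖e - P e‖ * ‖P d‖ - ‖P e‖ * ‖d - P d‖),
          norm_nonneg e, norm_nonneg d, norm_nonneg (e - P e), norm_nonneg (P e),
          norm_nonneg (d - P d), norm_nonneg (P d), mul_nonneg (norm_nonneg e) (norm_nonneg d),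
          sq_nonneg (‖e‖ * ‖d‖ - (‖e - P e‖ * ‖d - P d‖ + ‖P e‖ * ‖P d‖))]
      nlinarith [mul_nonneg (norm_nonneg (P e)) (norm_nonneg (P d)), hcs2,
        mul_le_mul_of_nonneg_left hcs1 (le_trans zero_le_one hs)]
    have hfinal : ‖e‖ ^ 2 ≤ s * (‖e‖ * ‖d‖) := by
      calc ‖e‖ ^ 2 ≤ s * ⟪e - P e, e⟫ + ⟪P e, e⟫ := hcoer
        _ = s * ⟪e - P e, d⟫ + ⟪P e, d⟫ := hkey
        _ ≤ s * (‖e‖ * ‖d‖) := hbound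
    rcases eq_or_lt_of_le (norm_nonneg e) with h0 | h0
    · rw [← h0]
      positivity
    · nlinarith [norm_nonneg d]
  · intro q
    have hnq := hnorm q
    constructor
    · rw [hA, hB]
      nlinarith [sq_nonneg ‖q - P q‖]
    · rw [hA, hB]
      nlinarith [sq_nonneg ‖P q‖]
end

section
/- Suppose the inf-sup condition holds with constant c > 0: for every nonzero v ∈ U, the supremum over w ∈ Z with T*w ≠ 0 of |⟨v, T*w⟩| / ‖T*w‖ is at least c‖v‖. Let b : H × H → ℝ be a symmetric positive semidefinite bilinear form that is spectrally equivalent to the form ⟨P·,·⟩, i.e., there are constants C_s ≥ c_s > 0 with c_s⟨P q, q⟩ ≤ b(q, q) ≤ C_s⟨P q, q⟩ for all q ∈ H. If û ∈ H and ũ ∈ U satisfies the modified (preconditioned) problem b(ũ, v) = b(û, v) for all v ∈ U, then ‖ũ − û‖ ≤ (1 + √C_s / (√c_s · c)) · inf over v ∈ U of ‖v − û‖. -/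
open scoped RealInnerProductSpace

/-!
For `v ∈ U` put `e = ũ - v ∈ U` and `d = û - v`. Galerkin orthogonality `b(e, d - e) = 0` and
positivity of `b` give `b(e, e) ≤ b(d, d)`. Since `P` is the orthogonal projection onto `W`,
`⟪P q, q⟫ = ‖P q‖² ≤ ‖q‖²`, and the inf-sup condition reads `c‖e‖ ≤ ‖P e‖`; hence
`c_s c² ‖e‖² ≤ b(e, e) ≤ b(d, d) ≤ C_s ‖d‖²`, and `‖ũ - û‖ ≤ ‖e‖ + ‖d‖` gives the bound.
-/

namespace Submodule

variable {H : Type*} [NormedAddCommGroup H] [InnerProductSpace ℝ H]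
  (K : Submodule ℝ H) [K.HasOrthogonalProjection]

theorem real_inner_starProjection_self (q : H) :
    ⟪K.starProjection q, q⟫ = ‖K.starProjection q‖ ^ 2 := by
  have h := K.starProjection_inner_eq_zero q (K.starProjection q) (K.starProjection_apply_mem q)
  rw [inner_sub_left, sub_eq_zero, real_inner_comm] at h
  rw [h, real_inner_self_eq_norm_sq]

theorem abs_real_inner_div_norm_le_norm_starProjection (v : H) {w : H} (hw : w ∈ K) :
    |⟪v, w⟫| / ‖w‖ ≤ ‖K.starProjection v‖ := by
  have h := K.starProjection_inner_eq_zero v w hw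
  rw [inner_sub_left, sub_eq_zero] at h
  rw [h]
  exact div_le_of_le_mul₀ (norm_nonneg _) (norm_nonneg _) (abs_real_inner_le_norm _ _)

end Submodule

theorem LinearMap.apply_self_le_apply_add_self {R M : Type*} [CommRing R] [PartialOrder R]
    [IsOrderedRing R] [AddCommGroup M] [Module R M] (b : M →ₗ[R] M →ₗ[R] R)
    (hsymm : ∀ x y, b x y = b y x) (hpsd : ∀ x, 0 ≤ b x x) {x y : M} (hxy : b x y = 0) :
    b x x ≤ b (x + y) (x + y) := by
  have hyx : b y x = 0 := hsymm y x ▸ hxy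
  simp only [map_add, LinearMap.add_apply, hxy, hyx, add_zero, zero_add]
  exact le_add_of_nonneg_right (hpsd y)

theorem mul_norm_le_norm_starProjection_of_le_sSup {H D : Type*} [NormedAddCommGroup H]
    [InnerProductSpace ℝ H] [AddCommGroup D] [Module ℝ D] (A : D →ₗ[ℝ] H)
    (Z : Submodule ℝ D) [(Z.map A).HasOrthogonalProjection] {c : ℝ} {v : H}
    (h : c * ‖v‖ ≤ sSup {r : ℝ | ∃ w : D, w ∈ Z ∧ A w ≠ 0 ∧ r = |⟪v, A w⟫| / ‖A w‖}) :
    c * ‖v‖ ≤ ‖(Z.map A).starProjection v‖ := by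
  refine h.trans (Real.sSup_le ?_ (norm_nonneg _))
  rintro r ⟨w, hwZ, -, rfl⟩
  exact (Z.map A).abs_real_inner_div_norm_le_norm_starProjection v (Submodule.mem_map_of_mem hwZ)

section Galerkin

variable {H : Type*} [NormedAddCommGroup H] [InnerProductSpace ℝ H]
  {W U : Submodule ℝ H} [W.HasOrthogonalProjection] {b : H →ₗ[ℝ] H →ₗ[ℝ] ℝ} {c cs Cs : ℝ}

theorem sq_mul_norm_sq_le_of_spectral_equiv
    (hstab : ∀ e ∈ U, c * ‖e‖ ≤ ‖W.starProjection e‖) (hc : 0 ≤ c)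
    (hbsymm : ∀ p q : H, b p q = b q p) (hbpsd : ∀ q : H, 0 ≤ b q q)
    (hcs : 0 ≤ cs) (hCs : 0 ≤ Cs)
    (hspec : ∀ q : H,
      cs * ⟪W.starProjection q, q⟫ ≤ b q q ∧ b q q ≤ Cs * ⟪W.starProjection q, q⟫)
    {e d : H} (he : e ∈ U) (hed : b e (d - e) = 0) :
    cs * (c * ‖e‖) ^ 2 ≤ Cs * ‖d‖ ^ 2 := by
  have hbe : b e e ≤ b d d := by
    simpa using b.apply_self_le_apply_add_self hbsymm hbpsd hed
  calc cs * (c * ‖e‖) ^ 2 ≤ cs * ‖W.starProjection e‖ ^ 2 := by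
        gcongr
        exact hstab e he
    _ ≤ b e e := W.real_inner_starProjection_self e ▸ (hspec e).1
    _ ≤ b d d := hbe
    _ ≤ Cs * ‖W.starProjection d‖ ^ 2 := W.real_inner_starProjection_self d ▸ (hspec d).2
    _ ≤ Cs * ‖d‖ ^ 2 := by
        gcongr
        exact W.norm_starProjection_apply_le d

theorem norm_le_of_spectral_equiv
    (hstab : ∀ e ∈ U, c * ‖e‖ ≤ ‖W.starProjection e‖) (hc : 0 < c)
    (hbsymm : ∀ p q : H, b p q = b q p) (hbpsd : ∀ q : H, 0 ≤ b q q)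
    (hcs : 0 < cs) (hcsCs : cs ≤ Cs)
    (hspec : ∀ q : H,
      cs * ⟪W.starProjection q, q⟫ ≤ b q q ∧ b q q ≤ Cs * ⟪W.starProjection q, q⟫)
    {e d : H} (he : e ∈ U) (hed : b e (d - e) = 0) :
    ‖e‖ ≤ √Cs / (√cs * c) * ‖d‖ := by
  have hsq := sq_mul_norm_sq_le_of_spectral_equiv hstab hc.le hbsymm hbpsd hcs.le
    (hcs.le.trans hcsCs) hspec he hed
  have hsqrt : √cs * (c * ‖e‖) ≤ √Cs * ‖d‖ := by
    have := Real.sqrt_le_sqrt hsq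
    rwa [Real.sqrt_mul hcs.le, Real.sqrt_mul (hcs.le.trans hcsCs),
      Real.sqrt_sq (by positivity), Real.sqrt_sq (norm_nonneg _)] at this
  rw [div_mul_eq_mul_div, le_div_iff₀ (by positivity)]
  linarith

end Galerkin

theorem preconditioned_llstar_inv_error_estimate_general
    {H : Type*} [NormedAddCommGroup H] [InnerProductSpace ℝ H] [CompleteSpace H]
    (T : H →ₗ.[ℝ] H)
    (Z : Submodule ℝ T.adjoint.domain) [FiniteDimensional ℝ Z]
    (W : Submodule ℝ H) (hW : W = Z.map T.adjoint.toFun)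
    (P : H →ₗ[ℝ] H) (hPmem : ∀ q : H, P q ∈ W)
    (hPorth : ∀ q : H, ∀ w ∈ W, ⟪q - P q, w⟫ = 0)
    (U : Submodule ℝ H)
    (c : ℝ) (hc : 0 < c)
    (hinfsup : ∀ v ∈ U, v ≠ 0 →
      c * ‖v‖ ≤ sSup {r : ℝ | ∃ w : T.adjoint.domain, w ∈ Z ∧ T.adjoint w ≠ 0 ∧
        r = |⟪v, T.adjoint w⟫| / ‖T.adjoint w‖})
    (b : H →ₗ[ℝ] H →ₗ[ℝ] ℝ)
    (hbsymm : ∀ p q : H, b p q = b q p) (hbpsd : ∀ q : H, 0 ≤ b q q)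
    (cs Cs : ℝ) (hcs : 0 < cs) (hcsCs : cs ≤ Cs)
    (hspec : ∀ q : H, cs * ⟪P q, q⟫ ≤ b q q ∧ b q q ≤ Cs * ⟪P q, q⟫)
    (uhat utilde : H) (hut : utilde ∈ U)
    (hweak : ∀ v ∈ U, b utilde v = b uhat v) :
    ‖utilde - uhat‖ ≤ (1 + Real.sqrt Cs / (Real.sqrt cs * c)) *
      ⨅ v : U, ‖(v : H) - uhat‖ := by
  subst hW
  have hP : ⇑P = (Z.map T.adjoint.toFun).starProjection := funext fun q ↦
    ((Z.map T.adjoint.toFun).eq_starProjection_of_mem_of_inner_eq_zero (hPmem q) (hPorth q)).symm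
  rw [hP] at hspec
  have hstab : ∀ e ∈ U, c * ‖e‖ ≤ ‖(Z.map T.adjoint.toFun).starProjection e‖ := fun e he ↦ by
    rcases eq_or_ne e 0 with rfl | he0
    · simp
    · exact mul_norm_le_norm_starProjection_of_le_sSup _ Z (hinfsup e he he0)
  have hquasi : ∀ v : U, ‖utilde - uhat‖ ≤ (1 + √Cs / (√cs * c)) * ‖(v : H) - uhat‖ := by
    intro v
    have hgal : b (utilde - v) ((uhat - v) - (utilde - v)) = 0 := by
      rw [hbsymm, sub_sub_sub_cancel_right, map_sub b, LinearMap.sub_apply,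
        hweak _ (U.sub_mem hut v.2), sub_self]
    have he := norm_le_of_spectral_equiv hstab hc hbsymm hbpsd hcs hcsCs hspec
      (U.sub_mem hut v.2) hgal
    calc ‖utilde - uhat‖ ≤ ‖utilde - v‖ + ‖(v : H) - uhat‖ :=
          norm_sub_le_norm_sub_add_norm_sub _ _ _
      _ ≤ (1 + √Cs / (√cs * c)) * ‖(v : H) - uhat‖ := by
        rw [norm_sub_rev uhat] at he
        linarith
  rw [Real.mul_iInf_of_nonneg (by positivity)]
  exact le_ciInf hquasi

/-- error estimate for the preconditioned (LL*)⁻¹ method: under the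
inf-sup condition with constant `c > 0`, if `b` is a symmetric positive semidefinite
bilinear form spectrally equivalent to `⟪P·,·⟫` with constants `0 < c_s ≤ C_s`, and
`ũ ∈ U` satisfies `b(ũ, v) = b(û, v)` for all `v ∈ U`, then
`‖ũ − û‖ ≤ (1 + √C_s/(√c_s · c)) inf_{v ∈ U} ‖v − û‖`. -/
theorem preconditioned_llstar_inv_error_estimate
    {H : Type*} [NormedAddCommGroup H] [InnerProductSpace ℝ H] [CompleteSpace H]
    (T : H →ₗ.[ℝ] H) (hdense : Dense (T.domain : Set H)) (hclosed : T.IsClosed)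
    (Z : Submodule ℝ T.adjoint.domain) [FiniteDimensional ℝ Z]
    (W : Submodule ℝ H) (hW : W = Z.map T.adjoint.toFun)
    (P : H →ₗ[ℝ] H) (hPmem : ∀ q : H, P q ∈ W)
    (hPorth : ∀ q : H, ∀ w ∈ W, ⟪q - P q, w⟫ = 0)
    (U : Submodule ℝ H) [FiniteDimensional ℝ U]
    (c : ℝ) (hc : 0 < c)
    (hinfsup : ∀ v ∈ U, v ≠ 0 →
      c * ‖v‖ ≤ sSup {r : ℝ | ∃ w : T.adjoint.domain, w ∈ Z ∧ T.adjoint w ≠ 0 ∧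
        r = |⟪v, T.adjoint w⟫| / ‖T.adjoint w‖})
    (b : H →ₗ[ℝ] H →ₗ[ℝ] ℝ)
    (hbsymm : ∀ p q : H, b p q = b q p) (hbpsd : ∀ q : H, 0 ≤ b q q)
    (cs Cs : ℝ) (hcs : 0 < cs) (hcsCs : cs ≤ Cs)
    (hspec : ∀ q : H, cs * ⟪P q, q⟫ ≤ b q q ∧ b q q ≤ Cs * ⟪P q, q⟫)
    (uhat utilde : H) (hut : utilde ∈ U)
    (hweak : ∀ v ∈ U, b utilde v = b uhat v) :
    ‖utilde - uhat‖ ≤ (1 + Real.sqrt Cs / (Real.sqrt cs * c)) *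
      ⨅ v : U, ‖(v : H) - uhat‖ :=
  preconditioned_llstar_inv_error_estimate_general T Z W hW P hPmem hPorth U c hc hinfsup b hbsymm
    hbpsd cs Cs hcs hcsCs hspec uhat utilde hut hweak
end
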